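/- Let d ≥ 1, m : Fin d → ℕ with m i ≥ 1, and r : Fin d → ℕ with 1 ≤ r i ≤ m i for every i and (r i)² ≤ ∏_{j} r j for every i. Equip the space of d-mode real tensors T : (Π i : Fin d, Fin (m i)) → ℝ with the Hilbert–Schmidt norm and Lebesgue measure, and let C_r = { S : rank_i S ≤ r i for all i ∈ Fin d }, where rank_i S is the rank of the i-th unfolding of S. Then for Lebesgue-almost every tensor T there exists a unique S ∈ C_r with ‖T − S‖ = dist(T, C_r); that is, almost every real d-mode tensor has a unique best rank-(r 1, …, r d) approximation. -/

import Mathlib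

open MeasureTheory

/-- The `i`-th unfolding of a `d`-mode tensor `T`: the matrix with rows indexed
by `Fin (m i)` and columns indexed by multi-indices over the remaining modes. -/
def modeUnfold {F : Type*} [Field F] {d : ℕ} {m : Fin d → ℕ}
    (T : (∀ i, Fin (m i)) → F) (i : Fin d) :
    Matrix (Fin (m i)) (∀ j : {j : Fin d // j ≠ i}, Fin (m j.1)) F :=
  fun k idx' =>
    T (fun j => if h : j = i then Fin.cast (congrArg m h.symm) k else idx' ⟨j, h⟩)

/-- The set `C_r` of real `d`-mode tensors all of whose unfolding ranks are at
most `r i`. -/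
def rankAtMostSet {d : ℕ} (m r : Fin d → ℕ) :
    Set (EuclideanSpace ℝ (∀ i, Fin (m i))) :=
  {S | ∀ i, (modeUnfold (S : (∀ i, Fin (m i)) → ℝ) i).rank ≤ r i}

/-! The set `C_r` is closed (matrix rank is lower semicontinuous) and contains `0`, and the
theorem holds for every nonempty closed set `s` of a finite-dimensional Euclidean space.
Indeed `‖z‖² - infDist z s ^ 2` is the supremum over `y ∈ s` of the affine functions
`2 ⟪y, z⟫ - ‖y‖²`, and at `z = x` the supremum is attained exactly at the nearest points `y`
of `x`. Where `infDist · s` is differentiable, which by Rademacher's theorem is almost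
everywhere since it is `1`-Lipschitz, every such affine minorant has the same gradient `2 y`,
so the nearest point is unique. -/

open Metric

theorem Matrix.isClosed_setOf_rank_le {𝕜 : Type*} [NontriviallyNormedField 𝕜] [CompleteSpace 𝕜]
    {p q : Type*} [Fintype p] [Fintype q] (k : ℕ) :
    IsClosed {A : Matrix p q 𝕜 | A.rank ≤ k} := by
  classical
  let toCLM : Matrix p q 𝕜 →ₗ[𝕜] (q → 𝕜) →L[𝕜] (p → 𝕜) :=
    LinearMap.toContinuousLinearMap.toLinearMap ∘ₗ Matrix.toLin'.toLinearMap
  have hrank (A : Matrix p q 𝕜) : ((toCLM A : (q → 𝕜) →ₗ[𝕜] (p → 𝕜))).rank = A.rank :=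
    (Module.finrank_eq_rank ..).symm
  have hset : {A : Matrix p q 𝕜 | A.rank ≤ k} =
      (toCLM ⁻¹' {f | ↑(k + 1) ≤ (f : (q → 𝕜) →ₗ[𝕜] (p → 𝕜)).rank})ᶜ := by
    ext A
    simp only [Set.mem_ofPred_eq, Set.mem_compl_iff, Set.mem_preimage, hrank, Nat.cast_le, not_le,
      Nat.lt_succ_iff]
  rw [hset]
  exact ((isOpen_setOfPred_nat_le_rank (k + 1)).preimage
    toCLM.continuous_of_finiteDimensional).isClosed_compl

theorem fderiv_eq_of_forall_le_of_eq {E : Type*} [NormedAddCommGroup E] [NormedSpace ℝ E]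
    {f g : E → ℝ} {g' : E →L[ℝ] ℝ} {x : E} (hf : DifferentiableAt ℝ f x)
    (hg : HasFDerivAt g g' x) (hle : ∀ z, g z ≤ f z) (heq : g x = f x) :
    fderiv ℝ f x = g' := by
  have hmin : IsLocalMin (fun z => f z - g z) x :=
    Filter.Eventually.of_forall fun z => by linarith [hle z]
  have := hmin.fderiv_eq_zero
  rwa [fderiv_fun_sub hf hg.differentiableAt, sub_eq_zero, hg.fderiv] at this

section NearestPoint

variable {E : Type*} [NormedAddCommGroup E] [InnerProductSpace ℝ E] {s : Set E} {x y : E}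

theorem two_inner_sub_norm_sq_le_norm_sq_sub_infDist_sq (hy : y ∈ s) (z : E) :
    2 * inner ℝ y z - ‖y‖ ^ 2 ≤ ‖z‖ ^ 2 - infDist z s ^ 2 := by
  have hdist : infDist z s ^ 2 ≤ dist z y ^ 2 := by
    gcongr
    · exact infDist_nonneg
    · exact infDist_le_dist_of_mem hy
  rw [dist_eq_norm, norm_sub_sq_real, real_inner_comm] at hdist
  linarith

theorem fderiv_norm_sq_sub_infDist_sq (hy : y ∈ s) (hxy : dist x y = infDist x s)
    (hd : DifferentiableAt ℝ (infDist · s) x) :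
    fderiv ℝ (fun z => ‖z‖ ^ 2 - infDist z s ^ 2) x = (2 : ℝ) • innerSL ℝ y := by
  refine fderiv_eq_of_forall_le_of_eq (f := fun z => ‖z‖ ^ 2 - infDist z s ^ 2)
    (g := fun z => 2 * inner ℝ y z - ‖y‖ ^ 2) ?_ ?_
    (two_inner_sub_norm_sq_le_norm_sq_sub_infDist_sq hy) ?_
  · exact ((contDiff_norm_sq ℝ (n := 1)).differentiable one_ne_zero x).sub (hd.pow 2)
  · exact ((innerSL ℝ y).hasFDerivAt.const_smul (2 : ℝ)).sub_const _
  · rw [← hxy, dist_eq_norm, norm_sub_sq_real, real_inner_comm]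
    ring

theorem eq_of_dist_eq_infDist_of_differentiableAt {y₁ y₂ : E} (hy₁ : y₁ ∈ s) (hy₂ : y₂ ∈ s)
    (hxy₁ : dist x y₁ = infDist x s) (hxy₂ : dist x y₂ = infDist x s)
    (hd : DifferentiableAt ℝ (infDist · s) x) : y₁ = y₂ := by
  have h := (fderiv_norm_sq_sub_infDist_sq hy₁ hxy₁ hd).symm.trans
    (fderiv_norm_sq_sub_infDist_sq hy₂ hxy₂ hd)
  refine ext_inner_right ℝ fun v => ?_
  simpa using congrArg (· v) h

theorem ae_existsUnique_dist_eq_infDist [FiniteDimensional ℝ E] [MeasurableSpace E]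
    [BorelSpace E] (μ : Measure E) [μ.IsAddHaarMeasure] (hs : IsClosed s) (hne : s.Nonempty) :
    ∀ᵐ x ∂μ, ∃! y, y ∈ s ∧ dist x y = infDist x s := by
  filter_upwards [(lipschitz_infDist_pt s).ae_differentiableAt] with x hx
  obtain ⟨y, hy, hxy⟩ := hs.exists_infDist_eq_dist hne x
  exact ⟨y, ⟨hy, hxy.symm⟩, fun y' ⟨hy', hxy'⟩ =>
    eq_of_dist_eq_infDist_of_differentiableAt hy' hy hxy' hxy.symm hx⟩

end NearestPoint

theorem continuous_modeUnfold {F : Type*} [Field F] [TopologicalSpace F] {d : ℕ}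
    {m : Fin d → ℕ} (i : Fin d) :
    Continuous fun T : (∀ i, Fin (m i)) → F => modeUnfold T i :=
  continuous_pi fun _ => continuous_pi fun _ => continuous_apply _

theorem isClosed_rankAtMostSet {d : ℕ} (m r : Fin d → ℕ) : IsClosed (rankAtMostSet m r) := by
  rw [rankAtMostSet, Set.ofPred_forall]
  exact isClosed_iInter fun i => (Matrix.isClosed_setOf_rank_le (r i)).preimage
    ((continuous_modeUnfold i).comp (PiLp.continuous_ofLp 2 _))

theorem zero_mem_rankAtMostSet {d : ℕ} (m r : Fin d → ℕ) : 0 ∈ rankAtMostSet m r :=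
  fun i => (Matrix.rank_zero (m := Fin (m i)) (R := ℝ)).trans_le (Nat.zero_le _)

theorem ae_unique_best_rank_r_approx_general
    (d : ℕ) (m r : Fin d → ℕ) :
    ∀ᵐ T ∂(volume : Measure (EuclideanSpace ℝ (∀ i, Fin (m i)))),
      ∃! S, S ∈ rankAtMostSet m r ∧
        dist T S = Metric.infDist T (rankAtMostSet m r) :=
  ae_existsUnique_dist_eq_infDist volume (isClosed_rankAtMostSet m r)
    ⟨0, zero_mem_rankAtMostSet m r⟩

/-- Lebesgue-almost every real `d`-mode tensor has a unique best
rank-`(r 1, …, r d)` approximation in the Hilbert–Schmidt norm. -/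
theorem ae_unique_best_rank_r_approx
    (d : ℕ) (hd : 1 ≤ d) (m r : Fin d → ℕ)
    (hm : ∀ i, 1 ≤ m i) (hr1 : ∀ i, 1 ≤ r i) (hrm : ∀ i, r i ≤ m i)
    (hsq : ∀ i, r i ^ 2 ≤ ∏ j, r j) :
    ∀ᵐ T ∂(volume : Measure (EuclideanSpace ℝ (∀ i, Fin (m i)))),
      ∃! S, S ∈ rankAtMostSet m r ∧
        dist T S = Metric.infDist T (rankAtMostSet m r) :=
  ae_unique_best_rank_r_approx_general d m r
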